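/- Let ℓ be a prime number. Let W, V, Q be finite-dimensional ℚ_ℓ-vector spaces equipped with linear endomorphisms F_W, F_V, F_Q respectively, and let φ : W → V and ψ : V → Q be linear maps with φ ∘ F_W = F_V ∘ φ and ψ ∘ F_V = F_Q ∘ ψ, such that the sequence W → V → Q is exact at V (i.e. im φ = ker ψ). Assume (W, F_W) and (Q, F_Q) are 1-semi-simple, and that at least one of the following holds: (a) every q ∈ Q with F_Q(q) = q equals ψ(v) for some v ∈ V with F_V(v) = v; or (b) ker(id − F_W) = 0; or (c) ker(id − F_Q) = 0. Then (V, F_V) is 1-semi-simple. -/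

import Mathlib

/-!
Write `T = id − F`. In finite dimension, `(V, F)` is 1-semi-simple exactly when
`ker T ∩ im T = 0`. Given `v = T x` with `T v = 0`, its image in `Q` lies in `ker T_Q ∩ im T_Q`,
so `ψ v = 0`; each of (a), (b), (c) then lets one write `v = φ (T_W u)` (for (a), lift `ψ x` to an
invariant `y` and pull `x − y` back to `W`). Now `φ (T_W² u) = T_V v = 0`, and since `T_W` is
bijective on the `T_W`-stable subspace `ker φ ∩ im T_W`, one gets `φ (T_W u) = 0`, i.e. `v = 0`.
-/

/-- The natural map `V^F → V_F` from the invariants `ker(id − F)` to the coinvariants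
`V ⧸ im(id − F)`, given by composing the inclusion with the quotient projection. -/
noncomputable def invariantsToCoinvariants {R : Type*} [CommRing R] {V : Type*}
    [AddCommGroup V] [Module R V] (F : V →ₗ[R] V) :
    LinearMap.ker (LinearMap.id - F) →ₗ[R] V ⧸ LinearMap.range (LinearMap.id - F) :=
  (LinearMap.range (LinearMap.id - F)).mkQ ∘ₗ (LinearMap.ker (LinearMap.id - F)).subtype

open LinearMap

theorem LinearMap.mem_ker_id_sub_iff {R M : Type*} [CommRing R] [AddCommGroup M] [Module R M]
    {F : M →ₗ[R] M} {x : M} : x ∈ ker (LinearMap.id - F) ↔ F x = x := by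
  rw [mem_ker, sub_apply, id_apply, sub_eq_zero, eq_comm]

theorem LinearMap.comp_id_sub_eq {R M N : Type*} [CommRing R] [AddCommGroup M] [Module R M]
    [AddCommGroup N] [Module R N] {F : M →ₗ[R] M} {G : N →ₗ[R] N} {φ : M →ₗ[R] N}
    (h : φ ∘ₗ F = G ∘ₗ φ) : φ ∘ₗ (LinearMap.id - F) = (LinearMap.id - G) ∘ₗ φ := by
  rw [comp_sub, sub_comp, h, comp_id, id_comp]

theorem injective_invariantsToCoinvariants_iff {R M : Type*} [CommRing R] [AddCommGroup M]
    [Module R M] (F : M →ₗ[R] M) :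
    Function.Injective (invariantsToCoinvariants F) ↔
      Disjoint (ker (LinearMap.id - F)) (range (LinearMap.id - F)) := by
  rw [← ker_eq_bot, invariantsToCoinvariants, ker_comp, Submodule.ker_mkQ,
    Submodule.disjoint_iff_comap_eq_bot]

section Field

variable {K W V : Type*} [Field K] [AddCommGroup W] [Module K W] [AddCommGroup V] [Module K V]

theorem bijective_invariantsToCoinvariants_iff [FiniteDimensional K V] (F : V →ₗ[K] V) :
    Function.Bijective (invariantsToCoinvariants F) ↔
      Disjoint (ker (LinearMap.id - F)) (range (LinearMap.id - F)) := by
  have hrank : Module.finrank K (ker (LinearMap.id - F)) =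
      Module.finrank K (V ⧸ range (LinearMap.id - F)) := by
    have := finrank_range_add_finrank_ker (LinearMap.id - F)
    have := (range (LinearMap.id - F)).finrank_quotient_add_finrank
    omega
  rw [Function.Bijective, ← injective_invariantsToCoinvariants_iff,
    ← injective_iff_surjective_of_finrank_eq_finrank hrank, and_self]

/-- For `T = id − F` this says that the quotient `W ⧸ N` is again 1-semi-simple. -/
theorem apply_mem_of_apply_apply_mem [FiniteDimensional K W] {T : W →ₗ[K] W}
    (hT : Disjoint (ker T) (range T)) {N : Submodule K W} (hN : ∀ x ∈ N, T x ∈ N) {u : W}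
    (hu : T (T u) ∈ N) : T u ∈ N := by
  set p := N ⊓ range T
  have hp : ∀ x ∈ p, T x ∈ p := fun x hx => ⟨hN x hx.1, x, rfl⟩
  have hinj : Set.InjOn T p := fun x hx y hy hxy =>
    sub_eq_zero.1 <| Submodule.disjoint_def.1 hT _ (by simp [hxy]) (sub_mem hx.2 hy.2)
  obtain ⟨k, hk, hTk⟩ := (injOn_iff_surjOn hp).1 hinj ⟨hu, T u, rfl⟩
  have : T u - k = 0 :=
    Submodule.disjoint_def.1 hT _ (by simp [hTk]) (sub_mem ⟨u, rfl⟩ hk.2)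
  exact sub_eq_zero.1 this ▸ hk.1

variable {Q : Type*} [AddCommGroup Q] [Module K Q]

theorem exists_apply_eq_apply_of_apply_eq {TW : W →ₗ[K] W} {TV : V →ₗ[K] V}
    {φ : W →ₗ[K] V} {ψ : V →ₗ[K] Q} (hφ : φ ∘ₗ TW = TV ∘ₗ φ) (hexact : range φ = ker ψ)
    {x y : V} (hy : TV y = 0) (hxy : ψ x = ψ y) : ∃ u, TV x = φ (TW u) := by
  obtain ⟨w, hw⟩ : x - y ∈ range φ := by rw [hexact, mem_ker, map_sub, hxy, sub_self]
  refine ⟨w, ?_⟩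
  calc TV x = TV (x - y) := by rw [map_sub, hy, sub_zero]
    _ = φ (TW w) := by rw [← hw, ← comp_apply (f := TV), ← hφ, comp_apply]

end Field

/-- Let `W → V → Q` be a sequence of finite-dimensional `ℚ_[ℓ]`-vector
spaces with equivariant maps `φ, ψ`, exact at `V`. If `(W, F_W)` and `(Q, F_Q)` are
1-semi-simple and either invariants lift from `Q` to `V`, or `W` has no nonzero invariants,
or `Q` has no nonzero invariants, then `(V, F_V)` is 1-semi-simple. -/
theorem oneSemisimple_of_exact
    (ℓ : ℕ) [Fact ℓ.Prime]
    (W V Q : Type*) [AddCommGroup W] [Module ℚ_[ℓ] W] [FiniteDimensional ℚ_[ℓ] W]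
    [AddCommGroup V] [Module ℚ_[ℓ] V] [FiniteDimensional ℚ_[ℓ] V]
    [AddCommGroup Q] [Module ℚ_[ℓ] Q] [FiniteDimensional ℚ_[ℓ] Q]
    (FW : W →ₗ[ℚ_[ℓ]] W) (FV : V →ₗ[ℚ_[ℓ]] V) (FQ : Q →ₗ[ℚ_[ℓ]] Q)
    (φ : W →ₗ[ℚ_[ℓ]] V) (ψ : V →ₗ[ℚ_[ℓ]] Q)
    (hφ : φ ∘ₗ FW = FV ∘ₗ φ) (hψ : ψ ∘ₗ FV = FQ ∘ₗ ψ)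
    (hexact : LinearMap.range φ = LinearMap.ker ψ)
    (hW : Function.Bijective (invariantsToCoinvariants FW))
    (hQ : Function.Bijective (invariantsToCoinvariants FQ))
    (h : (∀ q : Q, FQ q = q → ∃ v : V, FV v = v ∧ ψ v = q) ∨
      LinearMap.ker (LinearMap.id - FW) = ⊥ ∨
      LinearMap.ker (LinearMap.id - FQ) = ⊥) :
    Function.Bijective (invariantsToCoinvariants FV) := by
  rw [bijective_invariantsToCoinvariants_iff] at hW hQ ⊢
  set TW : W →ₗ[ℚ_[ℓ]] W := LinearMap.id - FW
  set TV : V →ₗ[ℚ_[ℓ]] V := LinearMap.id - FV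
  set TQ : Q →ₗ[ℚ_[ℓ]] Q := LinearMap.id - FQ
  have hφT : φ ∘ₗ TW = TV ∘ₗ φ := comp_id_sub_eq hφ
  have hφT' (w : W) : φ (TW w) = TV (φ w) := LinearMap.congr_fun hφT w
  have hψT (x : V) : ψ (TV x) = TQ (ψ x) := LinearMap.congr_fun (comp_id_sub_eq hψ) x
  refine Submodule.disjoint_def.2 fun v hv ⟨x, hx⟩ => ?_
  subst hx
  have hψv : ψ (TV x) = 0 :=
    Submodule.disjoint_def.1 hQ _ (by rw [mem_ker, ← hψT, hv, map_zero]) ⟨ψ x, (hψT x).symm⟩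
  obtain ⟨u, hu⟩ : ∃ u, TV x = φ (TW u) := by
    rcases h with hlift | hW0 | hQ0
    · have hψx : ψ x ∈ ker TQ := by rw [mem_ker, ← hψT, hψv]
      obtain ⟨y, hy, hxy⟩ := hlift (ψ x) (mem_ker_id_sub_iff.1 hψx)
      exact exists_apply_eq_apply_of_apply_eq hφT hexact (mem_ker_id_sub_iff.2 hy) hxy.symm
    · obtain ⟨w, hw⟩ : TV x ∈ range φ := hexact ▸ hψv
      obtain ⟨u, rfl⟩ := range_eq_top.1 (ker_eq_bot_iff_range_eq_top.1 hW0) w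
      exact ⟨u, hw.symm⟩
    · have hψx : ψ x = ψ 0 := by
        rw [map_zero, ← Submodule.mem_bot ℚ_[ℓ], ← hQ0, mem_ker, ← hψT, hψv]
      exact exists_apply_eq_apply_of_apply_eq hφT hexact (map_zero TV) hψx
  rw [hu] at hv ⊢
  exact apply_mem_of_apply_apply_mem (N := ker φ) hW
    (fun w hw => by rw [mem_ker, hφT', mem_ker.1 hw, map_zero]) (by rw [mem_ker, hφT', hv])
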